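/- For every n ≥ 1, the set S_{4n} ∪ {z}, where z = (α_{4n−1}, x₂, α_{4n−3}, x₄), is a good set with boundary {x₁, x₂, x₃}; in particular it is full. -/
import Mathlib


open scoped BigOperators

/-- Symbols: x₁,x₂,x₃,x₄ are 0,1,2,3 and αⱼ = j+3 (so all symbols are distinct naturals). -/
def α (j : ℕ) : ℕ := j + 3

/-- The points y₁, y₂, y₃, … of the paper's construction. -/
def y : ℕ → Fin 4 → ℕ := fun k =>
  if k = 1 then ![0, 1, 2, 3]
  else if k = 2 then ![0, 1, α 1, α 2]
  else match k % 4 with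
    | 1 => ![0, α (k - 1), α k, α (k + 1)]
    | 2 => ![α (k - 3), 1, α (k - 1), α k]
    | 3 => ![α k, α (k + 1), 2, α (k - 1)]
    | _ => ![α (k - 1), α k, α (k - 3), 3]

/-- u = (u₁,u₂,u₃,u₄) solves equation (1) for f on S. -/
def Solves (S : Set (Fin 4 → ℕ)) (f : (Fin 4 → ℕ) → ℂ) (u : Fin 4 → ℕ → ℂ) : Prop :=
  ∀ p ∈ S, f p = ∑ i, u i (p i)

/-- S is good: every complex function on S decomposes into coordinate functions. -/
def IsGood (S : Set (Fin 4 → ℕ)) : Prop := ∀ f, ∃ u, Solves S f u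

/-- i-th projection of S. -/
def proj (S : Set (Fin 4 → ℕ)) (i : Fin 4) : Set ℕ := (fun p => p i) '' S

/-- B is a boundary set of S: for every f and every prescription U on B,
equation (1) admits a solution agreeing with U on B, unique on the projections of S. -/
def IsBoundary (S : Set (Fin 4 → ℕ)) (B : Set ℕ) : Prop :=
  B ⊆ ⋃ i, proj S i ∧
  ∀ f : (Fin 4 → ℕ) → ℂ, ∀ U : ℕ → ℂ,
    (∃ u, Solves S f u ∧ ∀ i, ∀ a ∈ B ∩ proj S i, u i a = U a) ∧
    ∀ u v, Solves S f u → (∀ i, ∀ a ∈ B ∩ proj S i, u i a = U a) →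
      Solves S f v → (∀ i, ∀ a ∈ B ∩ proj S i, v i a = U a) →
      ∀ i, ∀ a ∈ proj S i, u i a = v i a

/-- S is full: a maximal good subset of the product of its projections. -/
def IsFull (S : Set (Fin 4 → ℕ)) : Prop :=
  IsGood S ∧ ∀ T : Set (Fin 4 → ℕ), S ⊆ T → (∀ p ∈ T, ∀ i, p i ∈ proj S i) →
    IsGood T → T = S

/-- Sₙ = {y₁,…,y_N}. -/
def Sn (N : ℕ) : Set (Fin 4 → ℕ) := y '' Set.Icc 1 N

/-- The infinite set S = {y₁, y₂, …}. -/
def Sinf : Set (Fin 4 → ℕ) := y '' Set.Ici 1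

/-- The extra point z = zₙ = (α_{4n−1}, x₂, α_{4n−3}, x₄). -/
def z (n : ℕ) : Fin 4 → ℕ := ![α (4 * n - 1), 1, α (4 * n - 3), 3]

/-- Two points of S are related iff some finite full subset of S contains both. -/
def Related (S : Set (Fin 4 → ℕ)) (p q : Fin 4 → ℕ) : Prop :=
  ∃ K, K ⊆ S ∧ K.Finite ∧ IsFull K ∧ p ∈ K ∧ q ∈ K

/-- The 4n×4n incidence matrix A_{4n}: rows y₂,…,y_{4n},zₙ; columns α₁,…,α_{4n}. -/
def A (n : ℕ) : Matrix (Fin (4 * n)) (Fin (4 * n)) ℚ :=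
  Matrix.of fun i j =>
    if ∃ k, (if (i : ℕ) = 4 * n - 1 then z n else y ((i : ℕ) + 2)) k = (j : ℕ) + 4
    then 1 else 0

lemma y_one : y 1 = ![0, 1, 2, 3] := rfl
lemma y_two : y 2 = ![0, 1, α 1, α 2] := rfl

lemma y_r1 (q : ℕ) : y (4*(q+1)+1) = ![0, α (4*q+4), α (4*(q+1)+1), α (4*(q+1)+2)] := by
  have h1 : ¬ (4*(q+1)+1 = 1) := by omega
  have h2 : ¬ (4*(q+1)+1 = 2) := by omega
  have h3 : (4*(q+1)+1) % 4 = 1 := by omega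
  have h4 : 4*(q+1)+1-1 = 4*q+4 := by omega
  simp only [y, if_neg h1, if_neg h2, h3, h4]

lemma y_r2 (q : ℕ) : y (4*(q+1)+2) = ![α (4*q+3), 1, α (4*(q+1)+1), α (4*(q+1)+2)] := by
  have h1 : ¬ (4*(q+1)+2 = 1) := by omega
  have h2 : ¬ (4*(q+1)+2 = 2) := by omega
  have h3 : (4*(q+1)+2) % 4 = 2 := by omega
  have h4 : 4*(q+1)+2-3 = 4*q+3 := by omega
  have h5 : 4*(q+1)+2-1 = 4*(q+1)+1 := by omega
  simp only [y, if_neg h1, if_neg h2, h3, h4, h5]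

lemma y_r3 (q : ℕ) : y (4*q+3) = ![α (4*q+3), α (4*q+4), 2, α (4*q+2)] := by
  have h1 : ¬ (4*q+3 = 1) := by omega
  have h2 : ¬ (4*q+3 = 2) := by omega
  have h3 : (4*q+3) % 4 = 3 := by omega
  have h4 : 4*q+3-1 = 4*q+2 := by omega
  have h5 : 4*q+3+1 = 4*q+4 := by omega
  simp only [y, if_neg h1, if_neg h2, h3, h4, h5]

lemma y_r4 (q : ℕ) : y (4*q+4) = ![α (4*q+3), α (4*q+4), α (4*q+1), 3] := by
  have h1 : ¬ (4*q+4 = 1) := by omega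
  have h2 : ¬ (4*q+4 = 2) := by omega
  have h3 : (4*q+4) % 4 = 0 := by omega
  have h4 : 4*q+4-1 = 4*q+3 := by omega
  have h5 : 4*q+4-3 = 4*q+1 := by omega
  simp only [y, if_neg h1, if_neg h2, h3, h4, h5]

lemma z_eq (m : ℕ) : z (m+1) = ![α (4*m+3), 1, α (4*m+1), 3] := by
  have h1 : 4*(m+1)-1 = 4*m+3 := by omega
  have h2 : 4*(m+1)-3 = 4*m+1 := by omega
  simp only [z, h1, h2]

noncomputable def u43v (f : (Fin 4 → ℕ) → ℂ) (U : ℕ → ℂ) : ℂ := f (y 1) - U 0 - U 1 - U 2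

noncomputable def QQ (n : ℕ) (f : (Fin 4 → ℕ) → ℂ) (U : ℕ → ℂ) : ℕ → ℂ × ℂ × ℂ × ℂ
  | 0 =>
    let b2 := f (y 2) - U 0 - U 1
    let b3 := f (y 3) - U 2
    let b4 := f (y 4) - u43v f U
    let A1 := (b2 + b4 - b3)/2
    let A2 := (b2 + b3 - b4)/2
    let s := b4 - A1
    let A3 := if 0 + 1 < n then (s - ((f (y 5) - U 0) - (f (y 6) - U 1)))/2
              else (f (z n) - U 1 - u43v f U) - A1
    (A1, A2, A3, s - A3)
  | (q+1) =>
    let prev := QQ n f U q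
    let b1 := f (y (4*(q+1)+1)) - U 0
    let b3 := f (y (4*(q+1)+3)) - U 2
    let b4 := f (y (4*(q+1)+4)) - u43v f U
    let A1 := ((b1 - prev.2.2.2) - (b3 - b4))/2
    let A2 := ((b1 - prev.2.2.2) + (b3 - b4))/2
    let s := b4 - A1
    let A3 := if (q+1) + 1 < n then (s - ((f (y (4*(q+1)+5)) - U 0) - (f (y (4*(q+1)+6)) - U 1)))/2
              else (f (z n) - U 1 - u43v f U) - A1
    (A1, A2, A3, s - A3)

variable (n : ℕ) (f : (Fin 4 → ℕ) → ℂ) (U : ℕ → ℂ)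

lemma QQ_sum0 : (QQ n f U 0).1 + (QQ n f U 0).2.1 = f (y 2) - U 0 - U 1 := by
  simp only [QQ]; ring

lemma QQ_sum (q : ℕ) : (QQ n f U (q+1)).1 + (QQ n f U (q+1)).2.1
    = (f (y (4*(q+1)+1)) - U 0) - (QQ n f U q).2.2.2 := by
  simp only [QQ]; ring

lemma QQ_diff (q : ℕ) : (QQ n f U q).2.1 - (QQ n f U q).1
    = (f (y (4*q+3)) - U 2) - (f (y (4*q+4)) - u43v f U) := by
  cases q with
  | zero => simp only [QQ]; try norm_num; try ring
  | succ q => simp only [QQ]; try ring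

lemma QQ_A4 (q : ℕ) : (QQ n f U q).2.2.2
    = ((f (y (4*q+4)) - u43v f U) - (QQ n f U q).1) - (QQ n f U q).2.2.1 := by
  cases q with
  | zero => simp only [QQ]; try norm_num; try ring
  | succ q => simp only [QQ]

lemma QQ_A3_lt (q : ℕ) (h : q+1 < n) : (QQ n f U q).2.2.1
    = (((f (y (4*q+4)) - u43v f U) - (QQ n f U q).1)
      - ((f (y (4*q+5)) - U 0) - (f (y (4*q+6)) - U 1)))/2 := by
  cases q with
  | zero => simp only [QQ, if_pos h]; try norm_num; try ring
  | succ q => simp only [QQ, if_pos h]; try norm_num; try ring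

lemma QQ_A3_last (q : ℕ) (h : ¬ (q+1 < n)) : (QQ n f U q).2.2.1
    = (f (z n) - U 1 - u43v f U) - (QQ n f U q).1 := by
  cases q with
  | zero => simp only [QQ, if_neg h]
  | succ q => simp only [QQ, if_neg h]

noncomputable def aav (n : ℕ) (f : (Fin 4 → ℕ) → ℂ) (U : ℕ → ℂ) (j : ℕ) : ℂ :=
  match (j-1) % 4 with
  | 0 => (QQ n f U ((j-1)/4)).1
  | 1 => (QQ n f U ((j-1)/4)).2.1
  | 2 => (QQ n f U ((j-1)/4)).2.2.1
  | _ => (QQ n f U ((j-1)/4)).2.2.2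

lemma aav_1 (q : ℕ) : aav n f U (4*q+1) = (QQ n f U q).1 := by
  have h1 : (4*q+1-1) % 4 = 0 := by omega
  have h2 : (4*q+1-1) / 4 = q := by omega
  simp only [aav, h1, h2]

lemma aav_2 (q : ℕ) : aav n f U (4*q+2) = (QQ n f U q).2.1 := by
  have h1 : (4*q+2-1) % 4 = 1 := by omega
  have h2 : (4*q+2-1) / 4 = q := by omega
  simp only [aav, h1, h2]

lemma aav_3 (q : ℕ) : aav n f U (4*q+3) = (QQ n f U q).2.2.1 := by
  have h1 : (4*q+3-1) % 4 = 2 := by omega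
  have h2 : (4*q+3-1) / 4 = q := by omega
  simp only [aav, h1, h2]

lemma aav_4 (q : ℕ) : aav n f U (4*q+4) = (QQ n f U q).2.2.2 := by
  have h1 : (4*q+4-1) % 4 = 3 := by omega
  have h2 : (4*q+4-1) / 4 = q := by omega
  simp only [aav, h1, h2]

noncomputable def uu (n : ℕ) (f : (Fin 4 → ℕ) → ℂ) (U : ℕ → ℂ) : Fin 4 → ℕ → ℂ :=
  fun i t => if t = (i : ℕ) then ![U 0, U 1, U 2, u43v f U] i else aav n f U (t - 3)

lemma uu_α (i : Fin 4) (j : ℕ) (hj : 1 ≤ j) : uu n f U i (α j) = aav n f U j := by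
  have hi : (i : ℕ) < 4 := i.isLt
  have : ¬ (α j = (i : ℕ)) := by simp only [α]; omega
  simp only [uu, α, Nat.add_sub_cancel]
  rw [if_neg (by omega)]

lemma uu_x (i : Fin 4) : uu n f U i i = ![U 0, U 1, U 2, u43v f U] i := by
  simp [uu]

lemma uu_x0 : uu n f U 0 0 = U 0 := by simp [uu]
lemma uu_x1 : uu n f U 1 1 = U 1 := by simp [uu]
lemma uu_x2 : uu n f U 2 2 = U 2 := by simp [uu]
lemma uu_x3 : uu n f U 3 3 = u43v f U := by
  have h : ((3 : Fin 4) : ℕ) = 3 := rfl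
  simp [uu, h]

lemma y_mem (k N : ℕ) (h1 : 1 ≤ k) (h2 : k ≤ N) : y k ∈ Sn N := ⟨k, ⟨h1, h2⟩, rfl⟩

lemma solves_uu (hn : 1 ≤ n) : Solves (Sn (4*n) ∪ {z n}) f (uu n f U) := by
  have hsum : ∀ a b c d : ℕ, ∑ i, uu n f U i (![a,b,c,d] i)
      = uu n f U 0 a + uu n f U 1 b + uu n f U 2 c + uu n f U 3 d := by
    intro a b c d
    simp [Fin.sum_univ_four]
  rintro p (⟨k, ⟨hk1, hk2⟩, rfl⟩ | hp)
  · obtain ⟨q, r, hr4, rfl⟩ : ∃ q r, r < 4 ∧ k = 4*q + (r+1) :=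
      ⟨(k-1)/4, (k-1)%4, by omega, by omega⟩
    interval_cases r
    · -- k = 4q+1
      simp only [Nat.reduceAdd, Nat.zero_add] at hk2 ⊢
      cases q with
      | zero =>
        have hs : ∑ i, uu n f U i (y (4*0+1) i) = U 0 + U 1 + U 2 + u43v f U := by
          norm_num [y_one, hsum, uu_x0, uu_x1, uu_x2, uu_x3]
        rw [show (4*0+1 : ℕ) = 1 from rfl] at hs ⊢
        rw [hs, u43v]; ring
      | succ q =>
        have hs : ∑ i, uu n f U i (y (4*(q+1)+1) i)
            = U 0 + (QQ n f U q).2.2.2 + (QQ n f U (q+1)).1 + (QQ n f U (q+1)).2.1 := by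
          rw [y_r1 q, hsum, uu_x0,
            uu_α n f U 1 (4*q+4) (by omega),
            uu_α n f U 2 (4*(q+1)+1) (by omega), uu_α n f U 3 (4*(q+1)+2) (by omega),
            aav_4, aav_1, aav_2]
        rw [hs]
        linear_combination -QQ_sum n f U q
    · -- k = 4q+2
      simp only [Nat.reduceAdd] at hk2 ⊢
      cases q with
      | zero =>
        have a1 : aav n f U 1 = (QQ n f U 0).1 := by simpa using aav_1 n f U 0
        have a2 : aav n f U 2 = (QQ n f U 0).2.1 := by simpa using aav_2 n f U 0
        have hs : ∑ i, uu n f U i (y (4*0+2) i)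
            = U 0 + U 1 + (QQ n f U 0).1 + (QQ n f U 0).2.1 := by
          norm_num [y_two, hsum, uu_x0, uu_x1,
            uu_α n f U 2 1 (by omega), uu_α n f U 3 2 (by omega), a1, a2]
        rw [show (4*0+2 : ℕ) = 2 from rfl] at hs ⊢
        rw [hs]
        linear_combination -QQ_sum0 n f U
      | succ q =>
        have hq1n : q + 1 < n := by omega
        have hs : ∑ i, uu n f U i (y (4*(q+1)+2) i)
            = (QQ n f U q).2.2.1 + U 1 + (QQ n f U (q+1)).1 + (QQ n f U (q+1)).2.1 := by
          rw [y_r2 q, hsum, uu_x1,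
            uu_α n f U 0 (4*q+3) (by omega),
            uu_α n f U 2 (4*(q+1)+1) (by omega), uu_α n f U 3 (4*(q+1)+2) (by omega),
            aav_3, aav_1, aav_2]
        rw [hs]
        have h5 : (4*q+5 : ℕ) = 4*(q+1)+1 := by ring
        have h6 : (4*q+6 : ℕ) = 4*(q+1)+2 := by ring
        have e1 := QQ_A3_lt n f U q hq1n
        have e2 := QQ_A4 n f U q
        rw [h5, h6] at e1
        linear_combination -QQ_sum n f U q + e2 - 2*e1
    · -- k = 4q+3
      simp only [Nat.reduceAdd] at hk2 ⊢
      have hs : ∑ i, uu n f U i (y (4*q+3) i)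
          = (QQ n f U q).2.2.1 + (QQ n f U q).2.2.2 + U 2 + (QQ n f U q).2.1 := by
        rw [y_r3 q, hsum, uu_x2,
          uu_α n f U 0 (4*q+3) (by omega), uu_α n f U 1 (4*q+4) (by omega),
          uu_α n f U 3 (4*q+2) (by omega), aav_3, aav_4, aav_2]
      rw [hs, QQ_A4 n f U q]
      linear_combination -QQ_diff n f U q
    · -- k = 4q+4
      simp only [Nat.reduceAdd] at hk2 ⊢
      have hs : ∑ i, uu n f U i (y (4*q+4) i)
          = (QQ n f U q).2.2.1 + (QQ n f U q).2.2.2 + (QQ n f U q).1 + u43v f U := by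
        rw [y_r4 q, hsum, uu_x3,
          uu_α n f U 0 (4*q+3) (by omega), uu_α n f U 1 (4*q+4) (by omega),
          uu_α n f U 2 (4*q+1) (by omega), aav_3, aav_4, aav_1]
      rw [hs, QQ_A4 n f U q]
      ring
  · -- p = z n
    obtain ⟨m, rfl⟩ : ∃ m, n = m + 1 := ⟨n - 1, by omega⟩
    simp only [Set.mem_singleton_iff] at hp
    subst hp
    have hs : ∑ i, uu (m+1) f U i (z (m+1) i)
        = (QQ (m+1) f U m).2.2.1 + U 1 + (QQ (m+1) f U m).1 + u43v f U := by
      rw [z_eq, hsum, uu_x1, uu_x3,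
        uu_α (m+1) f U 0 (4*m+3) (by omega), uu_α (m+1) f U 2 (4*m+1) (by omega),
        aav_3, aav_1]
    rw [hs]
    linear_combination -QQ_A3_last (m+1) f U m (by omega)

lemma coord_char (hn : 1 ≤ n) : ∀ p ∈ Sn (4*n) ∪ {z n}, ∀ i : Fin 4,
    p i = (i : ℕ) ∨ ∃ q, q < n ∧ p i = α (4*q + ![3,4,1,2] i) := by
  rintro p (⟨k, ⟨hk1, hk2⟩, rfl⟩ | hp) i
  · obtain ⟨q, r, hr4, rfl⟩ : ∃ q r, r < 4 ∧ k = 4*q + (r+1) :=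
      ⟨(k-1)/4, (k-1)%4, by omega, by omega⟩
    interval_cases r
    · simp only [Nat.reduceAdd, Nat.zero_add] at hk2 ⊢
      cases q with
      | zero =>
        rw [show (4*0+1 : ℕ) = 1 from rfl, y_one]
        fin_cases i <;> simp
      | succ q =>
        rw [y_r1 q]
        fin_cases i <;> simp
        · exact Or.inr ⟨q, by omega, by norm_num⟩
        · exact Or.inr ⟨q+1, by omega, by norm_num⟩
        · exact Or.inr ⟨q+1, by omega, by norm_num⟩
    · simp only [Nat.reduceAdd] at hk2 ⊢
      cases q with
      | zero =>
        rw [show (4*0+2 : ℕ) = 2 from rfl, y_two]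
        fin_cases i <;> simp
        · exact Or.inr ⟨0, by omega, by norm_num⟩
        · exact Or.inr ⟨0, by omega, by norm_num⟩
      | succ q =>
        rw [y_r2 q]
        fin_cases i <;> simp
        · exact Or.inr ⟨q, by omega, by norm_num⟩
        · exact Or.inr ⟨q+1, by omega, by norm_num⟩
        · exact Or.inr ⟨q+1, by omega, by norm_num⟩
    · simp only [Nat.reduceAdd] at hk2 ⊢
      rw [y_r3 q]
      fin_cases i <;> simp
      · exact Or.inr ⟨q, by omega, by norm_num⟩
      · exact Or.inr ⟨q, by omega, by norm_num⟩
      · exact Or.inr ⟨q, by omega, by norm_num⟩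
    · simp only [Nat.reduceAdd] at hk2 ⊢
      rw [y_r4 q]
      fin_cases i <;> simp
      · exact Or.inr ⟨q, by omega, by norm_num⟩
      · exact Or.inr ⟨q, by omega, by norm_num⟩
      · exact Or.inr ⟨q, by omega, by norm_num⟩
  · obtain ⟨m, rfl⟩ : ∃ m, n = m + 1 := ⟨n - 1, by omega⟩
    simp only [Set.mem_singleton_iff] at hp
    subst hp
    rw [z_eq]
    fin_cases i <;> simp
    · exact Or.inr ⟨m, by omega, by norm_num⟩
    · exact Or.inr ⟨m, by omega, by norm_num⟩

lemma uniq (hn : 1 ≤ n) (u v : Fin 4 → ℕ → ℂ)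
    (hu : Solves (Sn (4*n) ∪ {z n}) f u) (hv : Solves (Sn (4*n) ∪ {z n}) f v)
    (hb0 : u 0 0 = v 0 0) (hb1 : u 1 1 = v 1 1) (hb2 : u 2 2 = v 2 2) :
    ∀ i, ∀ a ∈ proj (Sn (4*n) ∪ {z n}) i, u i a = v i a := by
  have expand : ∀ (g : Fin 4 → ℕ → ℂ) (a b c d : ℕ),
      ∑ i, g i (![a,b,c,d] i) = g 0 a + g 1 b + g 2 c + g 3 d := by
    intro g a b c d; simp [Fin.sum_univ_four]
  have key : ∀ k, 1 ≤ k → k ≤ 4*n → ∀ a b c d : ℕ, y k = ![a,b,c,d] →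
      u 0 a + u 1 b + u 2 c + u 3 d = v 0 a + v 1 b + v 2 c + v 3 d := by
    intro k h1 h2 a b c d hy
    have hm : y k ∈ Sn (4*n) ∪ {z n} := Or.inl (y_mem _ _ h1 h2)
    have h := (hu (y k) hm).symm.trans (hv (y k) hm)
    rw [hy, expand u, expand v] at h
    exact h
  have e1 := key 1 (by omega) (by omega) 0 1 2 3 y_one
  have h33 : u 3 3 = v 3 3 := by linear_combination e1 - hb0 - hb1 - hb2
  have main : ∀ q, q < n →
      u 2 (α (4*q+1)) = v 2 (α (4*q+1)) ∧ u 3 (α (4*q+2)) = v 3 (α (4*q+2)) ∧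
      u 0 (α (4*q+3)) + u 1 (α (4*q+4)) = v 0 (α (4*q+3)) + v 1 (α (4*q+4)) := by
    intro q
    induction q with
    | zero =>
      intro _
      have e2 := key 2 (by omega) (by omega) 0 1 (α 1) (α 2) y_two
      have e3 := key 3 (by omega) (by omega) (α 3) (α 4) 2 (α 2) (by simpa using y_r3 0)
      have e4 := key 4 (by omega) (by omega) (α 3) (α 4) (α 1) 3 (by simpa using y_r4 0)
      norm_num
      refine ⟨?_, ?_, ?_⟩
      · linear_combination (e2 - hb0 - hb1 + e4 - h33 - e3 + hb2)/2
      · linear_combination (e2 - hb0 - hb1 + e3 - hb2 - e4 + h33)/2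
      · linear_combination (e3 - hb2 + e4 - h33 - e2 + hb0 + hb1)/2
    | succ q ih =>
      intro h
      obtain ⟨c1, c2, c3⟩ := ih (by omega)
      have e5 := key (4*(q+1)+1) (by omega) (by omega) 0 (α (4*q+4)) (α (4*(q+1)+1))
        (α (4*(q+1)+2)) (y_r1 q)
      have e6 := key (4*(q+1)+2) (by omega) (by omega) (α (4*q+3)) 1 (α (4*(q+1)+1))
        (α (4*(q+1)+2)) (y_r2 q)
      have e7 := key (4*(q+1)+3) (by omega) (by omega) (α (4*(q+1)+3)) (α (4*(q+1)+4)) 2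
        (α (4*(q+1)+2)) (y_r3 (q+1))
      have e8 := key (4*(q+1)+4) (by omega) (by omega) (α (4*(q+1)+3)) (α (4*(q+1)+4))
        (α (4*(q+1)+1)) 3 (y_r4 (q+1))
      refine ⟨?_, ?_, ?_⟩
      · linear_combination (e5 - hb0 + e6 - hb1 - c3)/4 + (e8 - h33 - e7 + hb2)/2
      · linear_combination (e5 - hb0 + e6 - hb1 - c3)/4 - (e8 - h33 - e7 + hb2)/2
      · linear_combination (e7 - hb2) - (e5 - hb0 + e6 - hb1 - c3)/4 + (e8 - h33 - e7 + hb2)/2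
  have vanish : ∀ q, q < n →
      u 2 (α (4*q+1)) = v 2 (α (4*q+1)) ∧ u 3 (α (4*q+2)) = v 3 (α (4*q+2)) ∧
      u 0 (α (4*q+3)) = v 0 (α (4*q+3)) ∧ u 1 (α (4*q+4)) = v 1 (α (4*q+4)) := by
    intro q hq
    obtain ⟨c1, c2, c3⟩ := main q hq
    by_cases hq1 : q + 1 < n
    · have e5 := key (4*(q+1)+1) (by omega) (by omega) 0 (α (4*q+4)) (α (4*(q+1)+1))
        (α (4*(q+1)+2)) (y_r1 q)
      have e6 := key (4*(q+1)+2) (by omega) (by omega) (α (4*q+3)) 1 (α (4*(q+1)+1))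
        (α (4*(q+1)+2)) (y_r2 q)
      refine ⟨c1, c2, ?_, ?_⟩
      · linear_combination (c3 + (e6 - hb1) - (e5 - hb0))/2
      · linear_combination (c3 - (e6 - hb1) + (e5 - hb0))/2
    · have hznm : z n ∈ Sn (4*n) ∪ {z n} := Or.inr rfl
      have hzeq : z n = ![α (4*q+3), 1, α (4*q+1), 3] := by
        have : n = q + 1 := by omega
        rw [this, z_eq]
      have h := (hu (z n) hznm).symm.trans (hv (z n) hznm)
      rw [hzeq, expand u, expand v] at h
      refine ⟨c1, c2, ?_, ?_⟩
      · linear_combination h - hb1 - h33 - c1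
      · linear_combination c3 - h + hb1 + h33 + c1
  rintro i a ⟨p, hp, rfl⟩
  show u i (p i) = v i (p i)
  rcases coord_char n hn p hp i with h | ⟨q, hq, h⟩
  · rw [h]
    fin_cases i
    · exact hb0
    · exact hb1
    · exact hb2
    · exact h33
  · rw [h]
    obtain ⟨d1, d2, d3, d4⟩ := vanish q hq
    fin_cases i
    · simpa using d3
    · simpa using d4
    · simpa using d1
    · simpa using d2

lemma mem0 (hn : 1 ≤ n) : (0:ℕ) ∈ proj (Sn (4*n) ∪ {z n}) 0 :=
  ⟨y 1, Or.inl (y_mem 1 (4*n) (by omega) (by omega)), rfl⟩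
lemma mem1 (hn : 1 ≤ n) : (1:ℕ) ∈ proj (Sn (4*n) ∪ {z n}) 1 :=
  ⟨y 1, Or.inl (y_mem 1 (4*n) (by omega) (by omega)), rfl⟩
lemma mem2 (hn : 1 ≤ n) : (2:ℕ) ∈ proj (Sn (4*n) ∪ {z n}) 2 :=
  ⟨y 1, Or.inl (y_mem 1 (4*n) (by omega) (by omega)), rfl⟩

lemma bval (hn : 1 ≤ n) (i : Fin 4) (a : ℕ) (haB : a ∈ ({0,1,2} : Set ℕ))
    (hap : a ∈ proj (Sn (4*n) ∪ {z n}) i) : a = (i:ℕ) ∧ (i:ℕ) < 3 := by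
  obtain ⟨p, hp, rfl⟩ := hap
  have ha3 : p i < 3 := by
    rcases haB with h | h | h <;> simp_all
  rcases coord_char n hn p hp i with h | ⟨q, hq, h⟩
  · exact ⟨h, by omega⟩
  · exfalso
    have : 1 ≤ (![3,4,1,2] : Fin 4 → ℕ) i := by fin_cases i <;> norm_num
    simp only [α] at h
    omega

theorem stmt_13' (hn : 1 ≤ n) :
    IsGood (Sn (4 * n) ∪ {z n}) ∧
    IsBoundary (Sn (4 * n) ∪ {z n}) {0, 1, 2} ∧
    IsFull (Sn (4 * n) ∪ {z n}) := by
  have hgood : IsGood (Sn (4 * n) ∪ {z n}) := by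
    intro f
    exact ⟨uu n f 0, solves_uu n f 0 hn⟩
  have hbd : IsBoundary (Sn (4 * n) ∪ {z n}) {0, 1, 2} := by
    constructor
    · intro a ha
      rcases ha with rfl | rfl | rfl
      · exact Set.mem_iUnion.2 ⟨0, mem0 n hn⟩
      · exact Set.mem_iUnion.2 ⟨1, mem1 n hn⟩
      · exact Set.mem_iUnion.2 ⟨2, mem2 n hn⟩
    · intro f U
      constructor
      · refine ⟨uu n f U, solves_uu n f U hn, ?_⟩
        rintro i a ⟨haB, hap⟩
        obtain ⟨ha, hi3⟩ := bval n hn i a haB hap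
        subst ha
        fin_cases i
        · exact uu_x0 n f U
        · exact uu_x1 n f U
        · exact uu_x2 n f U
        · simp at hi3
      · intro u v hu hbu hv hbv
        have hb0 : u 0 0 = v 0 0 :=
          (hbu 0 0 ⟨by simp, mem0 n hn⟩).trans (hbv 0 0 ⟨by simp, mem0 n hn⟩).symm
        have hb1 : u 1 1 = v 1 1 :=
          (hbu 1 1 ⟨by simp, mem1 n hn⟩).trans (hbv 1 1 ⟨by simp, mem1 n hn⟩).symm
        have hb2 : u 2 2 = v 2 2 :=
          (hbu 2 2 ⟨by simp, mem2 n hn⟩).trans (hbv 2 2 ⟨by simp, mem2 n hn⟩).symm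
        exact uniq n f hn u v hu hv hb0 hb1 hb2
  refine ⟨hgood, hbd, hgood, ?_⟩
  intro T hST hTproj hTgood
  refine Set.Subset.antisymm ?_ hST
  intro p hpT
  by_contra hpS
  obtain ⟨w, hw⟩ := hTgood (fun x => if x = p then 1 else 0)
  set g : (Fin 4 → ℕ) → ℂ := fun x => if x = p then 1 else 0 with hg
  have hwS : Solves (Sn (4 * n) ∪ {z n}) g w := fun q hq => hw q (hST hq)
  set cv : Fin 4 → ℂ := ![w 0 0, w 1 1, w 2 2, -(w 0 0 + w 1 1 + w 2 2)] with hcv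
  have hvS : Solves (Sn (4 * n) ∪ {z n}) g (fun i _ => cv i) := by
    intro q hq
    have hq0 : g q = 0 := by
      rw [hg]
      simp only [ite_eq_right_iff]
      intro h
      exact absurd (h ▸ hq) hpS
    rw [hq0, Fin.sum_univ_four, hcv]
    simp
  have heq := uniq n g hn w (fun i _ => cv i) hwS hvS
    (by simp [hcv]) (by simp [hcv]) (by simp [hcv])
  have hgp : g p = ∑ i, w i (p i) := hw p hpT
  have h1 : g p = 1 := by rw [hg]; simp
  have hsum0 : ∑ i, w i (p i) = 0 := by
    have hv : ∀ i, w i (p i) = cv i := fun i => heq i (p i) (hTproj p hpT i)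
    rw [Fin.sum_univ_four, hv 0, hv 1, hv 2, hv 3, hcv]
    simp
  rw [h1, hsum0] at hgp
  exact one_ne_zero hgp

/-- S_{4n} ∪ {zₙ} is good with boundary {x₁,x₂,x₃}; in particular
it is full. -/
theorem stmt_13 (n : ℕ) (hn : 1 ≤ n) :
    IsGood (Sn (4 * n) ∪ {z n}) ∧
    IsBoundary (Sn (4 * n) ∪ {z n}) {0, 1, 2} ∧
    IsFull (Sn (4 * n) ∪ {z n}) :=
  stmt_13' n hn
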